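/- There is a constant C > 0 (depending only on d and l) such that for every full-rank ℤ-lattice Λ in ℝ^d: I(B_Λ) ≥ vol(S^{d−1}) · (1 + r(Λ))^{−d·l_d/2} · r(Λ)^d / d, and I(ℝ^d ∖ B_Λ) ≤ C · r(Λ)^{1 − l₁/2}. -/

import Mathlib

/-
On the ball of radius `r = r(Λ)` every coordinate satisfies `|x_j| ≤ r`, so
`f ≥ (1 + r)^{-d l_d/2}` there, and the ball has volume `vol(S^{d-1}) r^d / d`.
Outside the ball some coordinate satisfies `|x_j| > r/√d`. There `f` is dominated by the
isotropic weight with the smallest exponent `l₁`, which factors over the coordinates, so its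
integral over the slab `{|x_j| ≥ s}`, `s = r/√d`, is the one-dimensional tail
`∫_{|t| ≥ s} (1 + |t|)^{-l₁/2} dt ≤ 2 s^{1-l₁/2} / (l₁/2 - 1)` times a constant.
Discreteness and full rank of `Λ` make `r(Λ)` positive.
-/

open MeasureTheory

namespace Stmt11

variable (d : ℕ) (l : Fin d → ℝ)

/-- `f(x) = ∏_{j=1}^d (1+|x_j|)^{−l_j/2}`. -/
noncomputable def f (x : EuclideanSpace ℝ (Fin d)) : ℝ :=
  ∏ j, (1 + |x j|) ^ (-(l j) / 2)

/-- `r(Λ) = (1/2)·min{‖b‖ : b ∈ Λ∖{0}}`. -/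
noncomputable def rlat (L : Submodule ℤ (EuclideanSpace ℝ (Fin d))) : ℝ :=
  (1 / 2) * sInf {t : ℝ | ∃ b ∈ L, b ≠ 0 ∧ ‖b‖ = t}

/-- `B_Λ = {x ∈ ℝ^d : ‖x‖ ≤ r(Λ)}`. -/
noncomputable def ball (L : Submodule ℤ (EuclideanSpace ℝ (Fin d))) :
    Set (EuclideanSpace ℝ (Fin d)) :=
  {x | ‖x‖ ≤ rlat d L}

/-- `I(D) = ∫_D f(x) dx`. -/
noncomputable def Iof (D : Set (EuclideanSpace ℝ (Fin d))) : ℝ :=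
  ∫ x in D, f d l x

/-- The Euclidean surface measure `μ` on the unit sphere `S^{d−1} ⊂ ℝ^d`. -/
noncomputable def sphμ : Measure (Metric.sphere (0 : EuclideanSpace ℝ (Fin d)) 1) :=
  (volume : Measure (EuclideanSpace ℝ (Fin d))).toSphere

open Real Set

lemma integrable_one_add_abs_rpow_neg {p : ℝ} (hp : 1 < p) :
    Integrable fun t : ℝ => (1 + |t|) ^ (-p) := by
  simpa [Real.norm_eq_abs] using
    integrable_one_add_norm (E := ℝ) (μ := volume) (r := p) (by simpa using hp)

lemma integral_one_add_abs_rpow_neg_pos {p : ℝ} (hp : 1 < p) :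
    0 < ∫ t : ℝ, (1 + |t|) ^ (-p) := by
  refine integral_pos_of_integrable_nonneg_nonzero (x := 0) ?_
    (integrable_one_add_abs_rpow_neg hp) (fun t => by simp only [Pi.zero_apply]; positivity)
    (by simp)
  exact (continuous_const.add continuous_abs).rpow_const fun t =>
    Or.inl (by positivity : (0 : ℝ) < 1 + |t|).ne'

lemma setIntegral_le_abs_one_add_abs_rpow_neg_le {p s : ℝ} (hp : 1 < p) (hs : 0 < s) :
    ∫ t in {t : ℝ | s ≤ |t|}, (1 + |t|) ^ (-p) ≤ 2 * (s ^ (1 - p) / (p - 1)) := by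
  have hint := integrable_one_add_abs_rpow_neg hp
  have hIoi : ∫ t in Ioi s, (1 + |t|) ^ (-p) ≤ s ^ (1 - p) / (p - 1) := by
    calc ∫ t in Ioi s, (1 + |t|) ^ (-p) ≤ ∫ t in Ioi s, t ^ (-p) := by
          refine setIntegral_mono_on hint.integrableOn
            (integrableOn_Ioi_rpow_of_lt (by linarith) hs) measurableSet_Ioi fun t ht => ?_
          have ht0 : 0 < t := hs.trans ht
          exact rpow_le_rpow_of_nonpos ht0 (by rw [abs_of_pos ht0]; linarith) (by linarith)
      _ = s ^ (1 - p) / (p - 1) := by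
          rw [integral_Ioi_rpow_of_lt (by linarith) hs, ← neg_div_neg_eq, neg_neg]
          ring_nf
  have hIic : ∫ t in Iic (-s), (1 + |t|) ^ (-p) = ∫ t in Ioi s, (1 + |t|) ^ (-p) := by
    simpa using integral_comp_neg_Iic (-s) (fun t => (1 + |t|) ^ (-p))
  have hsplit : {t : ℝ | s ≤ |t|} = Iic (-s) ∪ Ici s := by
    ext t; simp [le_abs', or_comm]
  rw [hsplit, setIntegral_union (Iic_disjoint_Ici.2 (by linarith)) measurableSet_Ici
    hint.integrableOn hint.integrableOn, hIic, integral_Ici_eq_integral_Ioi]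
  linarith

lemma exists_lt_abs_apply_of_lt_norm {ι : Type*} [Fintype ι] [Nonempty ι]
    {x : EuclideanSpace ℝ ι} {r : ℝ} (hr : r < ‖x‖) : ∃ j, r / √(Fintype.card ι) < |x j| := by
  obtain ⟨j, hj⟩ :=
    exists_eq_ciSup_of_finite (f := fun i => ‖inner ℝ (EuclideanSpace.basisFun ι ℝ i) x‖)
  refine ⟨j, ?_⟩
  have hle := (EuclideanSpace.basisFun ι ℝ).norm_le_card_mul_iSup_norm_inner x
  rw [← hj, EuclideanSpace.basisFun_inner, Real.norm_eq_abs] at hle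
  rw [div_lt_iff₀ (by positivity)]
  linarith

lemma setIntegral_le_sum_of_subset_iUnion {α ι : Type*} [MeasurableSpace α] {μ : Measure α}
    [Fintype ι] {f : α → ℝ} (hf : Integrable f μ) (hf0 : 0 ≤ f) {s : Set α} {t : ι → Set α}
    (hs : MeasurableSet s) (ht : ∀ i, MeasurableSet (t i)) (hst : s ⊆ ⋃ i, t i) :
    ∫ x in s, f x ∂μ ≤ ∑ i, ∫ x in t i, f x ∂μ := by
  simp_rw [← integral_indicator hs, ← integral_indicator (ht _)]
  rw [← integral_finsetSum _ fun i _ => hf.indicator (ht i)]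
  refine integral_mono (hf.indicator hs) (integrable_finsetSum _ fun i _ => hf.indicator (ht i))
    fun x => ?_
  have hsum0 : 0 ≤ ∑ i, (t i).indicator f x :=
    Finset.sum_nonneg fun i _ => indicator_nonneg (fun y _ => hf0 y) x
  by_cases hx : x ∈ s
  · obtain ⟨i, hi⟩ := mem_iUnion.mp (hst hx)
    rw [indicator_of_mem hx, ← indicator_of_mem hi f]
    exact Finset.single_le_sum (f := fun i => (t i).indicator f x)
      (fun i _ => indicator_nonneg (fun y _ => hf0 y) x) (Finset.mem_univ i)
  · rwa [indicator_of_notMem hx]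

lemma measurableSet_apply_mem {ι : Type*} [Fintype ι] (j : ι) {T : Set ℝ}
    (hT : MeasurableSet T) : MeasurableSet {x : EuclideanSpace ℝ ι | x j ∈ T} :=
  measurableSet_preimage (by fun_prop) hT

lemma setIntegral_prod_of_apply_mem {ι : Type*} [Fintype ι] [DecidableEq ι] (g : ι → ℝ → ℝ)
    (j : ι) {T : Set ℝ} (hT : MeasurableSet T) :
    ∫ x in {x : EuclideanSpace ℝ ι | x j ∈ T}, ∏ k, g k (x k) =
      (∫ t in T, g j t) * ∏ k ∈ Finset.univ \ {j}, ∫ t, g k t := by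
  have hind : {x : EuclideanSpace ℝ ι | x j ∈ T}.indicator (fun x => ∏ k, g k (x k)) =
      fun x => ∏ k, Function.update g j (T.indicator (g j)) k (x k) := by
    classical
    ext x
    rw [Finset.prod_congr rfl fun k _ =>
        Function.apply_update (fun k (G : ℝ → ℝ) => G (x k)) g j _ k,
      Finset.prod_update_of_mem (Finset.mem_univ j), indicator_apply, indicator_apply,
      Finset.prod_eq_mul_prod_sdiff_singleton_of_mem (Finset.mem_univ j)]
    by_cases hx : x j ∈ T <;> simp [hx]
  rw [← integral_indicator (measurableSet_apply_mem j hT), hind,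
    ← (PiLp.volume_preserving_toLp ι).integral_comp (MeasurableEquiv.toLp 2 _).measurableEmbedding,
    integral_fintype_prod_volume_eq_prod,
    Finset.prod_congr rfl fun k _ => Function.apply_update (fun k (G : ℝ → ℝ) => ∫ t, G t) g j _ k,
    Finset.prod_update_of_mem (Finset.mem_univ j), integral_indicator hT]

lemma exists_pos_le_norm_of_discreteTopology {E : Type*} [SeminormedAddCommGroup E] {s : Set E}
    [DiscreteTopology s] (h0 : (0 : E) ∈ s) : ∃ ε > 0, ∀ b ∈ s, b ≠ 0 → ε ≤ ‖b‖ := by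
  obtain ⟨ε, hε, hball⟩ :=
    Metric.isOpen_singleton_iff.mp (isOpen_discrete ({⟨0, h0⟩} : Set s))
  refine ⟨ε, hε, fun b hb hb0 => not_lt.1 fun hlt => hb0 ?_⟩
  simpa using congrArg Subtype.val (hball ⟨b, hb⟩ (by simpa [Subtype.dist_eq] using hlt))

section

variable {d : ℕ} {l : Fin d → ℝ}

lemma f_nonneg (x : EuclideanSpace ℝ (Fin d)) : 0 ≤ f d l x :=
  Finset.prod_nonneg fun j _ => by positivity

lemma rlat_pos (hd : 1 ≤ d) (Λ : Submodule ℤ (EuclideanSpace ℝ (Fin d))) [DiscreteTopology Λ]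
    (hspan : Submodule.span ℝ (Λ : Set (EuclideanSpace ℝ (Fin d))) = ⊤) : 0 < rlat d Λ := by
  have : Nonempty (Fin d) := ⟨⟨0, hd⟩⟩
  obtain ⟨b, hb, hb0⟩ : ∃ b ∈ Λ, b ≠ 0 := by
    by_contra! h
    exact top_ne_bot (hspan ▸ Submodule.span_eq_bot.2 h)
  obtain ⟨ε, hε, hle⟩ :=
    exists_pos_le_norm_of_discreteTopology (s := (Λ : Set (EuclideanSpace ℝ (Fin d)))) Λ.zero_mem
  have : ε ≤ sInf {t : ℝ | ∃ b ∈ Λ, b ≠ 0 ∧ ‖b‖ = t} :=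
    le_csInf ⟨‖b‖, b, hb, hb0, rfl⟩ fun t ⟨c, hc, hc0, ht⟩ => ht ▸ hle c hc hc0
  rw [rlat]
  linarith

lemma ball_eq_closedBall (Λ : Submodule ℤ (EuclideanSpace ℝ (Fin d))) :
    ball d Λ = Metric.closedBall 0 (rlat d Λ) := by
  ext x
  simp [ball]

lemma toReal_volume_closedBall (hd : 1 ≤ d) {r : ℝ} (hr : 0 ≤ r) :
    (volume (Metric.closedBall (0 : EuclideanSpace ℝ (Fin d)) r)).toReal =
      (sphμ d univ).toReal * r ^ d / d := by
  have hd0 : (d : ℝ) ≠ 0 := by positivity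
  rw [sphμ, Measure.toSphere_apply_univ, Measure.addHaar_closedBall _ _ hr,
    finrank_euclideanSpace_fin, ENNReal.toReal_mul, ENNReal.toReal_mul,
    ENNReal.toReal_ofReal (by positivity), ENNReal.toReal_natCast]
  field_simp

lemma integrable_f (hl : ∀ j, 2 < l j) : Integrable (f d l) := by
  have hprod : Integrable fun y : Fin d → ℝ => ∏ j, (1 + |y j|) ^ (-(l j / 2)) :=
    Integrable.fintype_prod (f := fun j t => (1 + |t|) ^ (-(l j / 2)))
      fun j => integrable_one_add_abs_rpow_neg (by linarith [hl j])
  have hf : f d l = (fun y : Fin d → ℝ => ∏ j, (1 + |y j|) ^ (-(l j / 2))) ∘ WithLp.ofLp := by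
    ext x
    simp [f, neg_div]
  rw [hf, (PiLp.volume_preserving_ofLp (Fin d)).integrable_comp_emb
    (MeasurableEquiv.toLp 2 (Fin d → ℝ)).symm.measurableEmbedding]
  exact hprod

lemma f_le_of_le {l' : Fin d → ℝ} (hll' : ∀ j, l j ≤ l' j) (x : EuclideanSpace ℝ (Fin d)) :
    f d l' x ≤ f d l x :=
  Finset.prod_le_prod (fun j _ => by positivity) fun j _ =>
    rpow_le_rpow_of_exponent_le (by linarith [abs_nonneg (x j)]) (by linarith [hll' j])

lemma rpow_le_f_const_of_norm_le {L r : ℝ} (hL : 0 ≤ L) {x : EuclideanSpace ℝ (Fin d)}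
    (hx : ‖x‖ ≤ r) : (1 + r) ^ (-(d : ℝ) * L / 2) ≤ f d (fun _ => L) x := by
  have hr : 0 ≤ r := (norm_nonneg x).trans hx
  calc (1 + r) ^ (-(d : ℝ) * L / 2) = ∏ _j : Fin d, (1 + r) ^ (-L / 2) := by
        rw [Finset.prod_const, Finset.card_univ, Fintype.card_fin, ← rpow_natCast,
          ← rpow_mul (by positivity)]
        ring_nf
    _ ≤ f d (fun _ => L) x := Finset.prod_le_prod (fun _ _ => by positivity) fun j _ =>
        rpow_le_rpow_of_nonpos (by positivity)
          (by linarith [(Real.norm_eq_abs (x j)).symm.trans_le (PiLp.norm_apply_le x j)])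
          (by linarith)

lemma le_setIntegral_closedBall_f (hd : 1 ≤ d) (hl : ∀ j, 2 < l j) {L : ℝ}
    (hlL : ∀ j, l j ≤ L) {r : ℝ} (hr : 0 ≤ r) :
    (sphμ d univ).toReal * (1 + r) ^ (-(d : ℝ) * L / 2) * r ^ d / d ≤
      ∫ x in Metric.closedBall 0 r, f d l x := by
  have hL : 0 ≤ L := by linarith [hl ⟨0, hd⟩, hlL ⟨0, hd⟩]
  calc (sphμ d univ).toReal * (1 + r) ^ (-(d : ℝ) * L / 2) * r ^ d / d
      = (1 + r) ^ (-(d : ℝ) * L / 2) *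
          (volume (Metric.closedBall (0 : EuclideanSpace ℝ (Fin d)) r)).toReal := by
        rw [toReal_volume_closedBall hd hr]
        ring
    _ ≤ ∫ x in Metric.closedBall 0 r, f d l x :=
        setIntegral_ge_of_const_le_real measurableSet_closedBall measure_closedBall_lt_top.ne
          (fun x hx => (rpow_le_f_const_of_norm_le hL (mem_closedBall_zero_iff.1 hx)).trans
            (f_le_of_le hlL x))
          (integrable_f hl).integrableOn

lemma exists_setIntegral_compl_closedBall_f_le (hd : 1 ≤ d) {q : ℝ} (hq : 2 < q)
    (hlq : ∀ j, q ≤ l j) :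
    ∃ C > 0, ∀ r > 0, ∫ x in (Metric.closedBall 0 r)ᶜ, f d l x ≤ C * r ^ (1 - q / 2) := by
  have : Nonempty (Fin d) := ⟨⟨0, hd⟩⟩
  have hp : 1 < q / 2 := by linarith
  set K := ∫ t : ℝ, (1 + |t|) ^ (-(q / 2))
  have hK : 0 < K := integral_one_add_abs_rpow_neg_pos hp
  have hsd : 0 < √(d : ℝ) := by positivity
  have hp1 : 0 < q / 2 - 1 := by linarith
  have hd0 : (0 : ℝ) < d := by exact_mod_cast hd
  refine ⟨d * (2 / (q / 2 - 1)) * K ^ (d - 1) * √d ^ (q / 2 - 1), by positivity, fun r hr => ?_⟩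
  set s := r / √(d : ℝ)
  have hs : 0 < s := by positivity
  have hT : MeasurableSet {t : ℝ | s ≤ |t|} := measurableSet_le (by fun_prop) (by fun_prop)
  have hcover : (Metric.closedBall (0 : EuclideanSpace ℝ (Fin d)) r)ᶜ ⊆
      ⋃ j, {x | x j ∈ {t : ℝ | s ≤ |t|}} := fun x hx => by
    obtain ⟨j, hj⟩ := exists_lt_abs_apply_of_lt_norm (by simpa using hx : r < ‖x‖)
    exact mem_iUnion.2 ⟨j, by simpa using hj.le⟩
  have hslab : ∀ j, ∫ x in {x | x j ∈ {t : ℝ | s ≤ |t|}}, f d (fun _ => q) x ≤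
      2 * (s ^ (1 - q / 2) / (q / 2 - 1)) * K ^ (d - 1) := by
    intro j
    simp only [f, neg_div]
    rw [setIntegral_prod_of_apply_mem (fun _ t => (1 + |t|) ^ (-(q / 2))) j hT,
      Finset.prod_const, Finset.card_univ_sdiff, Finset.card_singleton, Fintype.card_fin]
    exact mul_le_mul_of_nonneg_right (setIntegral_le_abs_one_add_abs_rpow_neg_le hp hs)
      (pow_nonneg hK.le _)
  have hfq := integrable_f (d := d) (l := fun _ => q) fun _ => hq
  calc ∫ x in (Metric.closedBall 0 r)ᶜ, f d l x
      ≤ ∫ x in (Metric.closedBall 0 r)ᶜ, f d (fun _ => q) x :=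
        setIntegral_mono (integrable_f fun j => hq.trans_le (hlq j)).integrableOn
          hfq.integrableOn (f_le_of_le hlq)
    _ ≤ ∑ j, ∫ x in {x | x j ∈ {t : ℝ | s ≤ |t|}}, f d (fun _ => q) x :=
        setIntegral_le_sum_of_subset_iUnion hfq (fun x => f_nonneg x)
          measurableSet_closedBall.compl (fun j => measurableSet_apply_mem j hT) hcover
    _ ≤ ∑ _j : Fin d, 2 * (s ^ (1 - q / 2) / (q / 2 - 1)) * K ^ (d - 1) :=
        Finset.sum_le_sum fun j _ => hslab j
    _ = d * (2 / (q / 2 - 1)) * K ^ (d - 1) * √d ^ (q / 2 - 1) * r ^ (1 - q / 2) := by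
        rw [Finset.sum_const, Finset.card_univ, Fintype.card_fin, nsmul_eq_mul,
          div_rpow hr.le hsd.le, show 1 - q / 2 = -(q / 2 - 1) by ring, rpow_neg hsd.le]
        field_simp

end

theorem statement11 (hd : 1 ≤ d) (hl4 : ∀ j, 4 ≤ l j) (hmono : Monotone l) :
    ∃ C > (0 : ℝ), ∀ Λ : Submodule ℤ (EuclideanSpace ℝ (Fin d)),
      DiscreteTopology Λ →
      Submodule.span ℝ (Λ : Set (EuclideanSpace ℝ (Fin d))) = ⊤ →
      (((sphμ d) Set.univ).toReal *
          (1 + rlat d Λ) ^ (-(d : ℝ) * l ⟨d - 1, Nat.sub_lt hd one_pos⟩ / 2) *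
          rlat d Λ ^ (d : ℕ) / d ≤ Iof d l (ball d Λ)) ∧
      Iof d l ((Set.univ : Set (EuclideanSpace ℝ (Fin d))) \ ball d Λ) ≤
        C * rlat d Λ ^ (1 - l ⟨0, hd⟩ / 2) := by
  obtain ⟨C, hC, htail⟩ := exists_setIntegral_compl_closedBall_f_le hd
    (by linarith [hl4 ⟨0, hd⟩] : 2 < l ⟨0, hd⟩) fun j => hmono (Nat.zero_le j.val)
  refine ⟨C, hC, fun Λ _ hspan => ?_⟩
  have hr := rlat_pos hd Λ hspan
  rw [Iof, Iof, ball_eq_closedBall, ← compl_eq_univ_sdiff]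
  exact ⟨le_setIntegral_closedBall_f hd (fun j => by linarith [hl4 j])
    (fun j => hmono (Nat.le_sub_one_of_lt j.isLt)) hr.le, htail _ hr⟩

end Stmt11
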